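/- Let F ∈ L_γ, γ > 0, with φ_F(γ) < ∞. Then for every γ′ ∈ (0,γ), uniformly in n ≥ 1 and a ≤ −1, P(S_{n−1} ≤ a, S_n > x) ≤ (1 + o(1)) e^{γ′ a} F̄(x) as x → ∞. -/

import Mathlib

/-!
On the event `S_{n-1} ≤ a, S_n > x` the last summand exceeds `x - a = x + |a|`, so the
probability is at most `F̄(x + |a|)`. For a fixed step `h`, the class `L_γ` gives
`F̄(y + h) ≤ e^{-c h} F̄(y)` for large `y` and any `c < γ`; iterating this along
`y, y + h, y + 2h, …` with `c` strictly between `γ'` and `γ` absorbs the rounding loss, so that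
`F̄(x + t) ≤ e^{-γ' t} F̄(x)` uniformly in `t ≥ 1` once `x` is large.
-/

open MeasureTheory Filter Set

/-- The tail distribution function of a probability measure on ℝ. -/
noncomputable def tail (μ : Measure ℝ) (x : ℝ) : ℝ := (μ (Set.Ioi x)).toReal

/-- The exponential moment `φ_F(α) = ∫ e^{αx} dF(x)`, valued in `[0,∞]`. -/
noncomputable def expMoment (μ : Measure ℝ) (α : ℝ) : ENNReal :=
  ∫⁻ x, ENNReal.ofReal (Real.exp (α * x)) ∂μ

/-- The class `L_γ`: positive tail, and `F̄(x-k)/F̄(x) → e^{γ k}` for every fixed `k`. -/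
def MemL (μ : Measure ℝ) (γ : ℝ) : Prop :=
  (∀ x, 0 < tail μ x) ∧
  ∀ k : ℝ, Tendsto (fun x => tail μ (x - k) / tail μ x) atTop (nhds (Real.exp (γ * k)))

theorem tail_antitone (μ : Measure ℝ) [IsFiniteMeasure μ] : Antitone (tail μ) :=
  fun _ _ hxy => ENNReal.toReal_mono (measure_ne_top _ _) (measure_mono (Ioi_subset_Ioi hxy))

theorem le_pow_mul_of_forall_add_le {f : ℝ → ℝ} {x₁ h r : ℝ} (hh : 0 ≤ h) (hr : 0 ≤ r)
    (hf : ∀ y ≥ x₁, f (y + h) ≤ r * f y) {x : ℝ} (hx : x₁ ≤ x) (m : ℕ) :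
    f (x + m * h) ≤ r ^ m * f x := by
  induction m with
  | zero => simp
  | succ m ih =>
    calc f (x + (m + 1 : ℕ) * h) = f (x + m * h + h) := by push_cast; ring_nf
      _ ≤ r * f (x + m * h) := hf _ (by nlinarith [m.cast_nonneg (α := ℝ)])
      _ ≤ r * (r ^ m * f x) := mul_le_mul_of_nonneg_left ih hr
      _ = r ^ (m + 1) * f x := by ring

theorem MemL.eventually_tail_add_le {μ : Measure ℝ} {γ c h : ℝ} (hL : MemL μ γ) (hc : c < γ)
    (hh : 0 < h) : ∀ᶠ y in atTop, tail μ (y + h) ≤ Real.exp (-(c * h)) * tail μ y := by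
  have hlim : Real.exp (γ * -h) < Real.exp (-(c * h)) := Real.exp_lt_exp.2 (by nlinarith)
  filter_upwards [(hL.2 (-h)).eventually_lt_const hlim] with y hy
  rw [sub_neg_eq_add, div_lt_iff₀ (hL.1 y)] at hy
  exact hy.le

theorem MemL.exists_tail_add_le {μ : Measure ℝ} [IsFiniteMeasure μ] {γ γ' : ℝ} (hL : MemL μ γ)
    (hγ' : 0 ≤ γ') (hlt : γ' < γ) :
    ∃ x₁, ∀ x ≥ x₁, ∀ t ≥ (1 : ℝ), tail μ (x + t) ≤ Real.exp (-(γ' * t)) * tail μ x := by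
  set c := (γ + γ') / 2 with hc_def
  have hc : 0 < c := by linarith
  -- the step `h` is chosen so that losing one step, `c * h`, costs at most `(c - γ') * t`
  set h := (c - γ') / c
  have hh : 0 < h := div_pos (by linarith) hc
  have hch : c * h = c - γ' := mul_div_cancel₀ _ hc.ne'
  obtain ⟨x₁, hx₁⟩ := eventually_atTop.1 (hL.eventually_tail_add_le (by linarith : c < γ) hh)
  refine ⟨x₁, fun x hx t ht => ?_⟩
  set m := ⌊t / h⌋₊
  have hm : t < (m + 1) * h := by
    rw [← div_lt_iff₀ hh]; exact Nat.lt_floor_add_one _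
  have hmt : (m : ℝ) * h ≤ t := by
    rw [← le_div_iff₀ hh]; exact Nat.floor_le (by positivity)
  calc tail μ (x + t) ≤ tail μ (x + m * h) := tail_antitone μ (by linarith)
    _ ≤ Real.exp (-(c * h)) ^ m * tail μ x :=
        le_pow_mul_of_forall_add_le hh.le (Real.exp_pos _).le hx₁ hx m
    _ = Real.exp (-(c * (m * h))) * tail μ x := by rw [← Real.exp_nat_mul]; ring_nf
    _ ≤ Real.exp (-(γ' * t)) * tail μ x := by
        refine mul_le_mul_of_nonneg_right (Real.exp_le_exp.2 ?_) (hL.1 x).le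
        nlinarith [mul_lt_mul_of_pos_left hm hc, mul_nonneg (sub_nonneg.2 hlt.le) (sub_nonneg.2 ht)]

theorem joint_tail_uniform_bound_general {Ω : Type*} [MeasurableSpace Ω]
    (ℙ : Measure Ω)
    (μ : Measure ℝ) [IsProbabilityMeasure μ]
    (ξ : ℕ → Ω → ℝ) (hmeas : ∀ i, Measurable (ξ i))
    (hdist : ∀ i, Measure.map (ξ i) ℙ = μ)
    (S : ℕ → Ω → ℝ) (hS : ∀ n ω, S n ω = ∑ i ∈ Finset.range n, ξ i ω)
    (γ : ℝ) (hL : MemL μ γ) :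
    ∀ γ' ∈ Set.Ioo 0 γ, ∀ ε > (0 : ℝ), ∃ x₀ : ℝ, ∀ x ≥ x₀,
      ∀ n : ℕ, 1 ≤ n → ∀ a ≤ (-1 : ℝ),
        (ℙ {ω | S (n - 1) ω ≤ a ∧ x < S n ω}).toReal ≤
          (1 + ε) * Real.exp (γ' * a) * tail μ x := by
  intro γ' hγ' ε hε
  obtain ⟨x₀, hx₀⟩ := hL.exists_tail_add_le hγ'.1.le hγ'.2
  refine ⟨x₀, fun x hx n hn a ha => ?_⟩
  obtain ⟨k, rfl⟩ := Nat.exists_eq_add_of_le' hn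
  have hevent : {ω | S (k + 1 - 1) ω ≤ a ∧ x < S (k + 1) ω} ⊆ ξ k ⁻¹' Ioi (x + -a) := by
    rintro ω ⟨hk, hk1⟩
    rw [Nat.add_sub_cancel, hS] at hk
    rw [hS, Finset.sum_range_succ] at hk1
    change x + -a < ξ k ω
    linarith
  have hprob : ℙ {ω | S (k + 1 - 1) ω ≤ a ∧ x < S (k + 1) ω} ≤ μ (Ioi (x + -a)) := by
    rw [← hdist k, Measure.map_apply (hmeas k) measurableSet_Ioi]
    exact measure_mono hevent
  calc (ℙ {ω | S (k + 1 - 1) ω ≤ a ∧ x < S (k + 1) ω}).toReal ≤ tail μ (x + -a) :=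
        ENNReal.toReal_mono (measure_ne_top μ _) hprob
    _ ≤ Real.exp (-(γ' * -a)) * tail μ x := hx₀ x hx (-a) (by linarith)
    _ ≤ (1 + ε) * Real.exp (γ' * a) * tail μ x := by
        rw [mul_neg, neg_neg, mul_assoc]
        exact le_mul_of_one_le_left (mul_nonneg (Real.exp_pos _).le (hL.1 x).le) (by linarith)

theorem joint_tail_uniform_bound {Ω : Type*} [MeasurableSpace Ω]
    (ℙ : Measure Ω) [IsProbabilityMeasure ℙ]
    (μ : Measure ℝ) [IsProbabilityMeasure μ]
    (ξ : ℕ → Ω → ℝ) (hmeas : ∀ i, Measurable (ξ i))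
    (hindep : ProbabilityTheory.iIndepFun ξ ℙ)
    (hdist : ∀ i, Measure.map (ξ i) ℙ = μ)
    (S : ℕ → Ω → ℝ) (hS : ∀ n ω, S n ω = ∑ i ∈ Finset.range n, ξ i ω)
    (γ : ℝ) (hγ : 0 < γ) (hL : MemL μ γ) (hφ : expMoment μ γ < ⊤) :
    ∀ γ' ∈ Set.Ioo 0 γ, ∀ ε > (0 : ℝ), ∃ x₀ : ℝ, ∀ x ≥ x₀,
      ∀ n : ℕ, 1 ≤ n → ∀ a ≤ (-1 : ℝ),
        (ℙ {ω | S (n - 1) ω ≤ a ∧ x < S n ω}).toReal ≤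
          (1 + ε) * Real.exp (γ' * a) * tail μ x :=
  joint_tail_uniform_bound_general ℙ μ ξ hmeas hdist S hS γ hL
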